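/- Let (𝔪^{l₁}_t, 𝔪^{r₁}_t, Φ¹_t) and (𝔪^{l₂}_t, 𝔪^{r₂}_t, Φ²_t) be equivalent one-parameter deformations of an oriented dialgebra D via Ψ_t = Σ ψ_i t^i with ψ₀ = id. Then the infinitesimals are cohomologous: mˡ₂₁(y₁,y₂) − mˡ₁₁(y₁,y₂) = y₁ ⊣ ψ₁(y₂) − ψ₁(y₁ ⊣ y₂) + ψ₁(y₁) ⊣ y₂, mʳ₂₁(y₁,y₂) − mʳ₁₁(y₁,y₂) = y₁ ⊢ ψ₁(y₂) − ψ₁(y₁ ⊢ y₂) + ψ₁(y₁) ⊢ y₂, and θ²₁(g, gx) − θ¹₁(g, gx) = −(g ψ₁(x) − ψ₁(gx)), where θ^j₁(g,x) = −φ^j₁(g, g⁻¹x). -/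

import Mathlib

/-- A dialgebra over `K`: two bilinear associative products `⊣` (`l`) and `⊢` (`r`)
satisfying the three dialgebra axioms. -/
structure Dialgebra (K D : Type*) [Field K] [AddCommGroup D] [Module K D] where
  l : D →ₗ[K] D →ₗ[K] D
  r : D →ₗ[K] D →ₗ[K] D
  l_assoc : ∀ x y z : D, l (l x y) z = l x (l y z)
  r_assoc : ∀ x y z : D, r (r x y) z = r x (r y z)
  ax1 : ∀ x y z : D, l (l x y) z = l x (r y z)
  ax2 : ∀ x y z : D, l (r x y) z = r x (l y z)
  ax3 : ∀ x y z : D, r (l x y) z = r (r x y) z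

/-- An oriented dialgebra over an oriented group `(G, ε)`: a dialgebra with a linear
`G`-action `ρ` such that `g(x ⊣ y) = gx ⊣ gy`, `g(x ⊢ y) = gx ⊢ gy` if `ε g = +1`,
and `g(x ⊣ y) = gy ⊣ gx`, `g(x ⊢ y) = gy ⊢ gx` if `ε g = -1`. -/
structure OrientedDialgebra (K D G : Type*) [Field K] [AddCommGroup D] [Module K D]
    [Group G] (ε : G →* ℤˣ) extends Dialgebra K D where
  ρ : G →* Module.End K D
  orient_l : ∀ (g : G) (x y : D),
    ρ g (l x y) = if ε g = 1 then l (ρ g x) (ρ g y) else l (ρ g y) (ρ g x)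
  orient_r : ∀ (g : G) (x y : D),
    ρ g (r x y) = if ε g = 1 then r (ρ g x) (ρ g y) else r (ρ g y) (ρ g x)


/-- A one-parameter formal deformation `(𝔪ˡ_t, 𝔪ʳ_t, Φ_t)` of an oriented dialgebra `D`
over `(G, ε)`, encoded by the coefficients `mˡᵢ, mʳᵢ ∈ Hom(D ⊗ D, D)` and
`φᵢ ∈ Maps(G, Hom(D, D))` of the formal power series, with all deformation axioms
written coefficientwise. -/
structure Deformation (K D G : Type*) [Field K] [AddCommGroup D] [Module K D] [Group G]
    (ε : G →* ℤˣ) (OD : OrientedDialgebra K D G ε) where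
  ml : ℕ → D →ₗ[K] D →ₗ[K] D
  mr : ℕ → D →ₗ[K] D →ₗ[K] D
  φ : ℕ → G → Module.End K D
  ml_zero : ml 0 = OD.l
  mr_zero : mr 0 = OD.r
  φ_zero : ∀ g : G, φ 0 g = OD.ρ g
  -- `(D[[t]], 𝔪ˡ_t, 𝔪ʳ_t)` is a dialgebra:
  ml_assoc : ∀ (n : ℕ) (x₁ x₂ x₃ : D),
    ∑ p ∈ Finset.HasAntidiagonal.antidiagonal n, ml p.1 (ml p.2 x₁ x₂) x₃
      = ∑ p ∈ Finset.HasAntidiagonal.antidiagonal n, ml p.1 x₁ (ml p.2 x₂ x₃)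
  mr_assoc : ∀ (n : ℕ) (x₁ x₂ x₃ : D),
    ∑ p ∈ Finset.HasAntidiagonal.antidiagonal n, mr p.1 (mr p.2 x₁ x₂) x₃
      = ∑ p ∈ Finset.HasAntidiagonal.antidiagonal n, mr p.1 x₁ (mr p.2 x₂ x₃)
  ax1 : ∀ (n : ℕ) (x₁ x₂ x₃ : D),
    ∑ p ∈ Finset.HasAntidiagonal.antidiagonal n, ml p.1 (ml p.2 x₁ x₂) x₃
      = ∑ p ∈ Finset.HasAntidiagonal.antidiagonal n, ml p.1 x₁ (mr p.2 x₂ x₃)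
  ax2 : ∀ (n : ℕ) (x₁ x₂ x₃ : D),
    ∑ p ∈ Finset.HasAntidiagonal.antidiagonal n, ml p.1 (mr p.2 x₁ x₂) x₃
      = ∑ p ∈ Finset.HasAntidiagonal.antidiagonal n, mr p.1 x₁ (ml p.2 x₂ x₃)
  ax3 : ∀ (n : ℕ) (x₁ x₂ x₃ : D),
    ∑ p ∈ Finset.HasAntidiagonal.antidiagonal n, mr p.1 (ml p.2 x₁ x₂) x₃
      = ∑ p ∈ Finset.HasAntidiagonal.antidiagonal n, mr p.1 (mr p.2 x₁ x₂) x₃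
  -- `Φ_t(g₁g₂, x) = Φ_t(g₁, Φ_t(g₂, x))`:
  φ_mul : ∀ (n : ℕ) (g₁ g₂ : G) (x : D),
    φ n (g₁ * g₂) x = ∑ p ∈ Finset.HasAntidiagonal.antidiagonal n, φ p.1 g₁ (φ p.2 g₂ x)
  -- `Φ_t(g, 𝔪ˡ_t(y₁, y₂))` equals `𝔪ˡ_t(Φ_t(g,y₁), Φ_t(g,y₂))` or
  -- `𝔪ˡ_t(Φ_t(g,y₂), Φ_t(g,y₁))` according to `ε g = ±1`, and similarly for `𝔪ʳ_t`:
  orient_l : ∀ (n : ℕ) (g : G) (y₁ y₂ : D),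
    ∑ p ∈ Finset.HasAntidiagonal.antidiagonal n, φ p.1 g (ml p.2 y₁ y₂)
      = if ε g = 1 then
          ∑ p ∈ Finset.HasAntidiagonal.antidiagonal n, ∑ q ∈ Finset.HasAntidiagonal.antidiagonal p.2, ml p.1 (φ q.1 g y₁) (φ q.2 g y₂)
        else
          ∑ p ∈ Finset.HasAntidiagonal.antidiagonal n, ∑ q ∈ Finset.HasAntidiagonal.antidiagonal p.2, ml p.1 (φ q.1 g y₂) (φ q.2 g y₁)
  orient_r : ∀ (n : ℕ) (g : G) (y₁ y₂ : D),
    ∑ p ∈ Finset.HasAntidiagonal.antidiagonal n, φ p.1 g (mr p.2 y₁ y₂)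
      = if ε g = 1 then
          ∑ p ∈ Finset.HasAntidiagonal.antidiagonal n, ∑ q ∈ Finset.HasAntidiagonal.antidiagonal p.2, mr p.1 (φ q.1 g y₁) (φ q.2 g y₂)
        else
          ∑ p ∈ Finset.HasAntidiagonal.antidiagonal n, ∑ q ∈ Finset.HasAntidiagonal.antidiagonal p.2, mr p.1 (φ q.1 g y₂) (φ q.2 g y₁)

/-! Each claim is the coefficient of `t` in one of the equivalence identities, in which the
first-order terms only meet `m₀`, `φ₀ = ρ` and `ψ₀ = id`. For `θ`, evaluating at `g x` cancels
the `ρ g⁻¹` in its definition. -/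

open Finset

section CoefficientOne

variable {R M : Type*} [CommSemiring R] [AddCommGroup M] [Module R M]

theorem sum_antidiagonal_one {A : Type*} [AddCommMonoid A] (f : ℕ × ℕ → A) :
    ∑ p ∈ antidiagonal 1, f p = f (0, 1) + f (1, 0) := by
  simp [Nat.sum_antidiagonal_succ]

theorem sub_eq_coboundary_of_equiv_coeff_one {μ : M →ₗ[R] M →ₗ[R] M}
    {m₁ m₂ : ℕ → M →ₗ[R] M →ₗ[R] M} {ψ : ℕ → Module.End R M} (h₁ : m₁ 0 = μ) (h₂ : m₂ 0 = μ) (hψ : ψ 0 = LinearMap.id)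
    {y₁ y₂ : M}
    (h : ∑ p ∈ antidiagonal 1, ψ p.1 (m₂ p.2 y₁ y₂)
      = ∑ p ∈ antidiagonal 1, ∑ q ∈ antidiagonal p.2, m₁ p.1 (ψ q.1 y₁) (ψ q.2 y₂)) :
    m₂ 1 y₁ y₂ - m₁ 1 y₁ y₂ = μ y₁ (ψ 1 y₂) - ψ 1 (μ y₁ y₂) + μ (ψ 1 y₁) y₂ := by
  simp only [sum_antidiagonal_one, Nat.antidiagonal_zero, sum_singleton, h₁, h₂, hψ,
    LinearMap.id_apply] at h
  linear_combination (norm := module) h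

theorem sub_eq_coboundary_of_intertwine_coeff_one {ρ : Module.End R M}
    {φ₁ φ₂ ψ : ℕ → Module.End R M}
    (h₁ : φ₁ 0 = ρ) (h₂ : φ₂ 0 = ρ) (hψ : ψ 0 = LinearMap.id) {x : M}
    (h : ∑ p ∈ antidiagonal 1, ψ p.1 (φ₂ p.2 x) = ∑ p ∈ antidiagonal 1, φ₁ p.1 (ψ p.2 x)) :
    φ₂ 1 x - φ₁ 1 x = ρ (ψ 1 x) - ψ 1 (ρ x) := by
  simp only [sum_antidiagonal_one, h₁, h₂, hψ, LinearMap.id_apply] at h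
  linear_combination (norm := module) h

end CoefficientOne

theorem equivalent_deformations_cohomologous_infinitesimals_general
    (K D G : Type*) [Field K] [AddCommGroup D] [Module K D] [Group G]
    (ε : G →* ℤˣ) (OD : OrientedDialgebra K D G ε)
    (Df1 Df2 : Deformation K D G ε OD)
    -- `Ψ_t = Σ ψᵢ tⁱ` is an equivalence from the second deformation to the first:
    (ψ : ℕ → Module.End K D) (hψ0 : ψ 0 = LinearMap.id)
    (heq_l : ∀ (n : ℕ) (y₁ y₂ : D),
      ∑ p ∈ Finset.HasAntidiagonal.antidiagonal n, ψ p.1 (Df2.ml p.2 y₁ y₂)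
        = ∑ p ∈ Finset.HasAntidiagonal.antidiagonal n, ∑ q ∈ Finset.HasAntidiagonal.antidiagonal p.2,
            Df1.ml p.1 (ψ q.1 y₁) (ψ q.2 y₂))
    (heq_r : ∀ (n : ℕ) (y₁ y₂ : D),
      ∑ p ∈ Finset.HasAntidiagonal.antidiagonal n, ψ p.1 (Df2.mr p.2 y₁ y₂)
        = ∑ p ∈ Finset.HasAntidiagonal.antidiagonal n, ∑ q ∈ Finset.HasAntidiagonal.antidiagonal p.2,
            Df1.mr p.1 (ψ q.1 y₁) (ψ q.2 y₂))
    (heq_φ : ∀ (n : ℕ) (g : G) (x : D),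
      ∑ p ∈ Finset.HasAntidiagonal.antidiagonal n, ψ p.1 (Df2.φ p.2 g x)
        = ∑ p ∈ Finset.HasAntidiagonal.antidiagonal n, Df1.φ p.1 g (ψ p.2 x))
    (θ₁ θ₂ : G → D → D)
    (hθ₁ : ∀ (g : G) (x : D), θ₁ g x = -(Df1.φ 1 g (OD.ρ g⁻¹ x)))
    (hθ₂ : ∀ (g : G) (x : D), θ₂ g x = -(Df2.φ 1 g (OD.ρ g⁻¹ x))) :
    (∀ y₁ y₂ : D,
      Df2.ml 1 y₁ y₂ - Df1.ml 1 y₁ y₂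
        = OD.l y₁ (ψ 1 y₂) - ψ 1 (OD.l y₁ y₂) + OD.l (ψ 1 y₁) y₂) ∧
    (∀ y₁ y₂ : D,
      Df2.mr 1 y₁ y₂ - Df1.mr 1 y₁ y₂
        = OD.r y₁ (ψ 1 y₂) - ψ 1 (OD.r y₁ y₂) + OD.r (ψ 1 y₁) y₂) ∧
    (∀ (g : G) (x : D),
      θ₂ g (OD.ρ g x) - θ₁ g (OD.ρ g x) = -(OD.ρ g (ψ 1 x) - ψ 1 (OD.ρ g x))) := by
  refine ⟨fun y₁ y₂ ↦ ?_, fun y₁ y₂ ↦ ?_, fun g x ↦ ?_⟩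
  · exact sub_eq_coboundary_of_equiv_coeff_one Df1.ml_zero Df2.ml_zero hψ0 (heq_l 1 y₁ y₂)
  · exact sub_eq_coboundary_of_equiv_coeff_one Df1.mr_zero Df2.mr_zero hψ0 (heq_r 1 y₁ y₂)
  · have hφ := sub_eq_coboundary_of_intertwine_coeff_one (φ₁ := (Df1.φ · g))
      (φ₂ := (Df2.φ · g)) (Df1.φ_zero g) (Df2.φ_zero g) hψ0 (heq_φ 1 g x)
    rw [hθ₁, hθ₂, Representation.inv_self_apply, ← hφ]
    abel

/-- the infinitesimals of two equivalent one-parameter deformations of an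
oriented dialgebra are cohomologous: their differences are the coboundary of `ψ₁`. -/
theorem equivalent_deformations_cohomologous_infinitesimals
    (K D G : Type*) [Field K] [AddCommGroup D] [Module K D] [Group G] [CharZero K]
    (ε : G →* ℤˣ) (OD : OrientedDialgebra K D G ε)
    (Df1 Df2 : Deformation K D G ε OD)
    -- `Ψ_t = Σ ψᵢ tⁱ` is an equivalence from the second deformation to the first:
    (ψ : ℕ → Module.End K D) (hψ0 : ψ 0 = LinearMap.id)
    (heq_l : ∀ (n : ℕ) (y₁ y₂ : D),
      ∑ p ∈ Finset.HasAntidiagonal.antidiagonal n, ψ p.1 (Df2.ml p.2 y₁ y₂)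
        = ∑ p ∈ Finset.HasAntidiagonal.antidiagonal n, ∑ q ∈ Finset.HasAntidiagonal.antidiagonal p.2,
            Df1.ml p.1 (ψ q.1 y₁) (ψ q.2 y₂))
    (heq_r : ∀ (n : ℕ) (y₁ y₂ : D),
      ∑ p ∈ Finset.HasAntidiagonal.antidiagonal n, ψ p.1 (Df2.mr p.2 y₁ y₂)
        = ∑ p ∈ Finset.HasAntidiagonal.antidiagonal n, ∑ q ∈ Finset.HasAntidiagonal.antidiagonal p.2,
            Df1.mr p.1 (ψ q.1 y₁) (ψ q.2 y₂))
    (heq_φ : ∀ (n : ℕ) (g : G) (x : D),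
      ∑ p ∈ Finset.HasAntidiagonal.antidiagonal n, ψ p.1 (Df2.φ p.2 g x)
        = ∑ p ∈ Finset.HasAntidiagonal.antidiagonal n, Df1.φ p.1 g (ψ p.2 x))
    (θ₁ θ₂ : G → D → D)
    (hθ₁ : ∀ (g : G) (x : D), θ₁ g x = -(Df1.φ 1 g (OD.ρ g⁻¹ x)))
    (hθ₂ : ∀ (g : G) (x : D), θ₂ g x = -(Df2.φ 1 g (OD.ρ g⁻¹ x))) :
    (∀ y₁ y₂ : D,
      Df2.ml 1 y₁ y₂ - Df1.ml 1 y₁ y₂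
        = OD.l y₁ (ψ 1 y₂) - ψ 1 (OD.l y₁ y₂) + OD.l (ψ 1 y₁) y₂) ∧
    (∀ y₁ y₂ : D,
      Df2.mr 1 y₁ y₂ - Df1.mr 1 y₁ y₂
        = OD.r y₁ (ψ 1 y₂) - ψ 1 (OD.r y₁ y₂) + OD.r (ψ 1 y₁) y₂) ∧
    (∀ (g : G) (x : D),
      θ₂ g (OD.ρ g x) - θ₁ g (OD.ρ g x) = -(OD.ρ g (ψ 1 x) - ψ 1 (OD.ρ g x))) :=
  equivalent_deformations_cohomologous_infinitesimals_general K D G ε OD Df1 Df2 ψ hψ0 heq_l heq_r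
    heq_φ θ₁ θ₂ hθ₁ hθ₂
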